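/- arXiv:2211.09930 — 7 statements merged into one kernel-verified Lean document; each statement's English description precedes it below -/
import Mathlib

section
/- Let n be a positive integer, H a finite group, and G = (ZMod n) × H. For any function a : G → ℂ, the group determinant of G factors as a product of n group determinants of H evaluated at roots of unity: det(the |G|×|G| matrix with (g,g') entry a(g·g'⁻¹)) = ∏_{k=0}^{n-1} det(the |H|×|H| matrix with (h,h') entry ∑_{i=0}^{n-1} a((i, h·h'⁻¹)) · ω^{i·k}), where ω = exp(2πi/n). -/
/-- The group determinant of `a : G → R`: the determinant of the `|G| × |G|` matrix
whose `(g, h)` entry is `a (g * h⁻¹)`. -/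
noncomputable def groupDet {G : Type*} [Group G] [Fintype G] [DecidableEq G]
    {R : Type*} [CommRing R] (a : G → R) : R :=
  Matrix.det (Matrix.of fun g h : G => a (g * h⁻¹))

open Matrix Finset Kronecker

theorem groupDet_prod_cyclic (n : ℕ) [NeZero n] (H : Type*) [Group H] [Fintype H]
    [DecidableEq H] (a : Multiplicative (ZMod n) × H → ℂ) :
    groupDet a =
      ∏ k ∈ Finset.range n,
        groupDet (fun h : H =>
          ∑ i ∈ Finset.range n,
            a (Multiplicative.ofAdd (i : ZMod n), h) *
              Complex.exp (2 * Real.pi * Complex.I / n) ^ (i * k)) := by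
  classical
  set ω : ℂ := Complex.exp (2 * Real.pi * Complex.I / n) with hωdef
  have hprim : IsPrimitiveRoot ω n := Complex.isPrimitiveRoot_exp n (NeZero.ne n)
  have hω1 : ω ^ n = 1 := hprim.pow_eq_one
  have hmod : ∀ m : ℕ, ω ^ (m % n) = ω ^ m := fun m => (pow_eq_pow_mod m hω1).symm
  have hnat : ∀ m : ℕ, ω ^ ((m : ZMod n)).val = ω ^ m := fun m => by
    rw [ZMod.val_natCast, hmod]
  have hadd : ∀ x y : ZMod n, ω ^ (x + y).val = ω ^ x.val * ω ^ y.val := fun x y => by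
    rw [ZMod.val_add, hmod, pow_add]
  -- Fin n ≃ ZMod n
  let eZ : Fin n ≃ ZMod n :=
    { toFun := fun i => ((i : ℕ) : ZMod n)
      invFun := fun z => ⟨z.val, ZMod.val_lt z⟩
      left_inv := fun i => by
        ext; simp [ZMod.val_natCast, Nat.mod_eq_of_lt i.isLt]
      right_inv := fun z => ZMod.natCast_rightInverse z }
  have hsum : ∀ F : ZMod n → ℂ, ∑ i : ZMod n, F i = ∑ i ∈ Finset.range n, F ↑i := by
    intro F
    rw [← Fin.sum_univ_eq_sum_range (fun i => F ↑i) n]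
    exact (Fintype.sum_equiv eZ (fun i => F ((i : ℕ) : ZMod n)) F (fun i => rfl)).symm
  have hprodZ : ∀ F : ZMod n → ℂ, ∏ i : ZMod n, F i = ∏ i ∈ Finset.range n, F ↑i := by
    intro F
    rw [← Fin.prod_univ_eq_prod_range (fun i => F ↑i) n]
    exact (Fintype.prod_equiv eZ (fun i => F ((i : ℕ) : ZMod n)) F (fun i => rfl)).symm
  -- matrices
  set M : Matrix (Multiplicative (ZMod n) × H) (Multiplicative (ZMod n) × H) ℂ :=
    Matrix.of (fun p q => a (p * q⁻¹)) with hM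
  set V : Matrix (Multiplicative (ZMod n)) (Multiplicative (ZMod n)) ℂ :=
    Matrix.of (fun z w => ω ^ ((Multiplicative.toAdd z) * (Multiplicative.toAdd w)).val) with hV
  set U : Matrix (Multiplicative (ZMod n) × H) (Multiplicative (ZMod n) × H) ℂ :=
    Matrix.of (fun p q => V p.1 q.1 * if p.2 = q.2 then (1 : ℂ) else 0) with hU
  set Bmat : Multiplicative (ZMod n) → Matrix H H ℂ := fun k =>
    Matrix.of (fun h g => ∑ i : ZMod n,
      a (Multiplicative.ofAdd i, h * g⁻¹) * ω ^ (i * Multiplicative.toAdd k).val) with hB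
  set D : Matrix (Multiplicative (ZMod n) × H) (Multiplicative (ZMod n) × H) ℂ :=
    Matrix.of (fun p q => if p.1 = q.1 then Bmat p.1 p.2 q.2 else 0) with hD
  -- the intertwining identity
  have hUM : U * M = D * U := by
    ext ⟨z, h⟩ ⟨w, g⟩
    simp only [mul_apply, hU, hM, hD, hB, hV, Matrix.of_apply]
    rw [Fintype.sum_prod_type, Fintype.sum_prod_type]
    simp only [ite_mul, mul_ite, one_mul, zero_mul, mul_zero, mul_one,
      Finset.sum_ite_eq, Finset.sum_ite_eq', Finset.mem_univ, if_true]
    rw [Finset.sum_mul]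
    refine Fintype.sum_equiv
      (((Equiv.addLeft (Multiplicative.toAdd w)).trans Multiplicative.ofAdd).symm) _ _ ?_
    intro j
    simp only [Equiv.symm_trans_apply, Equiv.coe_addLeft, Equiv.addLeft_symm,
      Multiplicative.ofAdd_symm_eq]
    have e1 : (j, h) * ((w, g) : Multiplicative (ZMod n) × H)⁻¹ = (j * w⁻¹, h * g⁻¹) := rfl
    rw [e1]
    have e2 : Multiplicative.ofAdd (-Multiplicative.toAdd w + Multiplicative.toAdd j)
        = j * w⁻¹ := by
      rw [add_comm, ← sub_eq_add_neg, ofAdd_sub, ofAdd_toAdd, ofAdd_toAdd, div_eq_mul_inv]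
    rw [e2]
    have e3 : ω ^ ((Multiplicative.toAdd (j * w⁻¹)) * Multiplicative.toAdd z).val *
        ω ^ (Multiplicative.toAdd z * Multiplicative.toAdd w).val =
        ω ^ (Multiplicative.toAdd z * Multiplicative.toAdd j).val := by
      rw [← hadd]
      congr 1
      simp only [toAdd_mul, toAdd_inv]
      ring
    calc ω ^ (Multiplicative.toAdd z * Multiplicative.toAdd j).val * a (j * w⁻¹, h * g⁻¹)
        = a (j * w⁻¹, h * g⁻¹) *
            (ω ^ ((Multiplicative.toAdd (j * w⁻¹)) * Multiplicative.toAdd z).val *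
             ω ^ (Multiplicative.toAdd z * Multiplicative.toAdd w).val) := by rw [e3]; ring
      _ = a (j * w⁻¹, h * g⁻¹) *
            ω ^ ((-Multiplicative.toAdd w + Multiplicative.toAdd j) * Multiplicative.toAdd z).val *
            ω ^ (Multiplicative.toAdd z * Multiplicative.toAdd w).val := by
          rw [toAdd_mul, toAdd_inv, ← sub_eq_add_neg, sub_eq_neg_add]; ring
  -- U is invertible
  have hdetV : V.det ≠ 0 := by
    have hVd : V.submatrix (eZ.trans Multiplicative.ofAdd) (eZ.trans Multiplicative.ofAdd) =
        Matrix.vandermonde (fun i : Fin n => ω ^ (i : ℕ)) := by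
      ext i j
      simp only [Matrix.submatrix_apply, hV, Matrix.of_apply, Matrix.vandermonde_apply,
        Equiv.trans_apply, toAdd_ofAdd]
      show ω ^ ((((i : ℕ) : ZMod n)) * (((j : ℕ) : ZMod n))).val = _
      rw [← Nat.cast_mul, hnat, ← pow_mul]
    have := Matrix.det_submatrix_equiv_self (eZ.trans Multiplicative.ofAdd) V
    rw [hVd, Matrix.det_vandermonde] at this
    rw [← this]
    apply Finset.prod_ne_zero_iff.2
    intro i _
    apply Finset.prod_ne_zero_iff.2
    intro j hj
    rw [Finset.mem_Ioi] at hj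
    refine sub_ne_zero.2 fun hc => ?_
    exact (show (i : ℕ) < (j : ℕ) from hj).ne' (hprim.pow_inj j.isLt i.isLt hc)
  have hdetU : U.det ≠ 0 := by
    have hUk : U = V ⊗ₖ (1 : Matrix H H ℂ) := by
      ext ⟨z, h⟩ ⟨w, g⟩
      simp [hU, Matrix.one_apply, Matrix.kroneckerMap_apply]
    rw [hUk, Matrix.det_kronecker, Matrix.det_one, one_pow, mul_one]
    exact pow_ne_zero _ hdetV
  -- determinant of D
  have hdetD : D.det = ∏ k : Multiplicative (ZMod n), (Bmat k).det := by
    have hDb : D = (Matrix.blockDiagonal (fun k => Bmat k)).submatrix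
        (Equiv.prodComm (Multiplicative (ZMod n)) H) (Equiv.prodComm (Multiplicative (ZMod n)) H) := by
      ext ⟨z, h⟩ ⟨w, g⟩
      simp only [Matrix.submatrix_apply, Equiv.prodComm_apply, Prod.swap_prod_mk,
        Matrix.blockDiagonal_apply, hD, Matrix.of_apply]
    rw [hDb, Matrix.det_submatrix_equiv_self, Matrix.det_blockDiagonal]
  -- final computation
  have hdet : M.det = D.det := by
    have h1 : U.det * M.det = D.det * U.det := by
      rw [← Matrix.det_mul, ← Matrix.det_mul, hUM]
    have h2 : U.det * M.det = U.det * D.det := by rw [h1]; ring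
    exact mul_left_cancel₀ hdetU h2
  have hblock : ∀ k : ℕ, (Bmat (Multiplicative.ofAdd ((k : ZMod n)))).det =
      groupDet (fun h : H => ∑ i ∈ Finset.range n,
        a (Multiplicative.ofAdd (i : ZMod n), h) * ω ^ (i * k)) := by
    intro k
    unfold groupDet
    congr 1
    ext h g
    simp only [hB, Matrix.of_apply, toAdd_ofAdd]
    rw [hsum fun i => a (Multiplicative.ofAdd i, h * g⁻¹) * ω ^ (i * (k : ZMod n)).val]
    refine Finset.sum_congr rfl fun i _ => ?_
    rw [← Nat.cast_mul, hnat]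
  show M.det = _
  rw [hdet, hdetD]
  have hswap : ∏ k : Multiplicative (ZMod n), (Bmat k).det =
      ∏ z : ZMod n, (Bmat (Multiplicative.ofAdd z)).det :=
    (Fintype.prod_equiv Multiplicative.ofAdd _ _ fun z => rfl).symm
  rw [hswap, hprodZ fun z => (Bmat (Multiplicative.ofAdd z)).det]
  exact Finset.prod_congr rfl fun k _ => hblock k
end

section
/- Let H be a finite group and G = (ZMod 2) × H. For any functions a, b : H → ℂ, letting c : G → ℂ be defined by c(0,h) = a(h) and c(1,h) = b(h), one has D_G(c) = D_H(a + b) · D_H(a − b), where (a ± b)(h) = a(h) ± b(h). -/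
open Matrix in
lemma det_fromBlocks_swap {n R : Type*} [DecidableEq n] [Fintype n] [CommRing R]
    (A B : Matrix n n R) :
    (fromBlocks A B B A).det = (A + B).det * (A - B).det := by
  have key : fromBlocks (1 : Matrix n n R) 1 0 1 * fromBlocks A B B A *
      fromBlocks 1 (-1) 0 1 = fromBlocks (A + B) 0 B (A - B) := by
    simp [Matrix.fromBlocks_multiply]
    constructor <;> abel
  have hd := congrArg Matrix.det key
  rw [Matrix.det_mul, Matrix.det_mul, Matrix.det_fromBlocks_zero₂₁,
    Matrix.det_fromBlocks_zero₂₁, Matrix.det_fromBlocks_zero₁₂] at hd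
  simpa using hd

def z2Equiv (H : Type*) : Multiplicative (ZMod 2) × H ≃ H ⊕ H where
  toFun p := if Multiplicative.toAdd p.1 = 0 then Sum.inl p.2 else Sum.inr p.2
  invFun s := s.elim (fun h => (Multiplicative.ofAdd 0, h))
    (fun h => (Multiplicative.ofAdd 1, h))
  left_inv := by
    rintro ⟨i, h⟩
    have : i = Multiplicative.ofAdd (0 : ZMod 2) ∨
        i = Multiplicative.ofAdd (1 : ZMod 2) := by revert i; decide
    rcases this with rfl | rfl <;> simp
  right_inv := by rintro (h | h) <;> simp

theorem groupDet_Z2_prod (H : Type*) [Group H] [Fintype H] [DecidableEq H]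
    (a b : H → ℂ) (c : Multiplicative (ZMod 2) × H → ℂ)
    (hc0 : ∀ h : H, c (Multiplicative.ofAdd (0 : ZMod 2), h) = a h)
    (hc1 : ∀ h : H, c (Multiplicative.ofAdd (1 : ZMod 2), h) = b h) :
    groupDet c = groupDet (a + b) * groupDet (a - b) := by
  classical
  set A : Matrix H H ℂ := Matrix.of fun g h : H => a (g * h⁻¹) with hA
  set B : Matrix H H ℂ := Matrix.of fun g h : H => b (g * h⁻¹) with hB
  have hM : (Matrix.of fun g h : Multiplicative (ZMod 2) × H => c (g * h⁻¹))
      = (Matrix.fromBlocks A B B A).submatrix (z2Equiv H) (z2Equiv H) := by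
    ext ⟨i, x⟩ ⟨j, y⟩
    have hi : i = Multiplicative.ofAdd (0 : ZMod 2) ∨
        i = Multiplicative.ofAdd (1 : ZMod 2) := by revert i; decide
    have hj : j = Multiplicative.ofAdd (0 : ZMod 2) ∨
        j = Multiplicative.ofAdd (1 : ZMod 2) := by revert j; decide
    rcases hi with rfl | rfl <;> rcases hj with rfl | rfl <;>
      simp [z2Equiv, Matrix.fromBlocks, Prod.ext_iff, hA, hB, ← hc0, ← hc1] <;>
      norm_num <;>
      congr 1 <;> decide
  have h1 : groupDet c = (Matrix.fromBlocks A B B A).det := by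
    rw [groupDet, hM, Matrix.det_submatrix_equiv_self]
  rw [h1, det_fromBlocks_swap]
  congr 1 <;> · rw [groupDet]; congr 1; ext g h <;> simp [hA, hB, Pi.add_apply, Pi.sub_apply]
end

section
/- Let G be a finite group. For any functions a, b : G → ℂ, the group determinant is multiplicative with respect to convolution: D_G(a ⋆ b) = D_G(a) · D_G(b), where (a ⋆ b)(g) = ∑_{(h,k) : hk = g} a(h)·b(k). -/
theorem groupDet_convolution (G : Type*) [Group G] [Fintype G] [DecidableEq G]
    (a b : G → ℂ) :
    groupDet (fun g : G =>
        ∑ p ∈ Finset.univ.filter (fun p : G × G => p.1 * p.2 = g), a p.1 * b p.2) =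
      groupDet a * groupDet b := by
  unfold groupDet
  rw [← Matrix.det_mul]
  congr 1
  ext g h
  simp only [Matrix.mul_apply, Matrix.of_apply]
  refine Finset.sum_nbij' (fun p : G × G => p.1⁻¹ * g) (fun k : G => (g * k⁻¹, k * h⁻¹))
    (fun p hp => Finset.mem_univ _) ?_ ?_ ?_ ?_
  · intro k hk
    simp only [Finset.mem_filter, Finset.mem_univ, true_and]
    group
  · intro p hp
    simp only [Finset.mem_filter, Finset.mem_univ, true_and] at hp
    have h1 : g * (p.1⁻¹ * g)⁻¹ = p.1 := by group
    have h2 : p.1⁻¹ * g = p.2 * h := by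
      have : g = p.1 * p.2 * h := by rw [hp]; group
      rw [this]; group
    have h2' : p.1⁻¹ * g * h⁻¹ = p.2 := by rw [h2]; group
    exact Prod.ext h1 h2'
  · intro k hk; group
  · intro p hp
    simp only [Finset.mem_filter, Finset.mem_univ, true_and] at hp
    have h1 : g * (p.1⁻¹ * g)⁻¹ = p.1 := by group
    have h2 : p.1⁻¹ * g = p.2 * h := by
      have : g = p.1 * p.2 * h := by rw [hp]; group
      rw [this]; group
    have h2' : p.1⁻¹ * g * h⁻¹ = p.2 := by rw [h2]; group
    rw [h1, h2']
end

section
/- Let G = (ZMod 2) × D_8, where D_8 is the dihedral group of order 8. The set of even integers that are integer group determinants of G is exactly {2^16 · m : m ∈ ℤ}. -/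
/-- The set of integer group determinants of a finite group `G`. -/
def detSet (G : Type*) [Group G] [Fintype G] [DecidableEq G] : Set ℤ :=
  {d : ℤ | ∃ a : G → ℤ, groupDet a = d}

/-!
In `ℤ/2 × D₈` the element `z = (1, 1)` is a central involution. Ordering the group along the
cosets of `⟨z⟩` turns the group matrix into a block matrix `[[A, B], [B, A]]`, so
`D(a) = D_{D₈}(a₊) · D_{D₈}(a₋)` with `a± = a(1, ·) ± a(z, ·)`. Since `a₊ ≡ a₋ (mod 2)`, the two
factors have the same parity. The same argument for the central involution `r²` of `D₈` gives
`D_{D₈}(b) = ℓ₁ ℓ₂ ℓ₃ ℓ₄ · (p² + q² - P² - Q²)²`, where the `ℓᵢ` are the four linear characters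
evaluated at the image of `b` in `D₈/⟨r²⟩`. Modulo 2 this is `(∑ b)⁶`, so if `D_{D₈}(b)` is even
then every `ℓᵢ = 2mᵢ` is even and `∑ mᵢ` is even. Either all `mᵢ` are odd, and then
`4 ∣ p² + q² - P² - Q²`, or at least two of them are even. In both cases `2⁸ ∣ D_{D₈}(b)`.
Conversely, explicit pairs `a₊ ≡ a₋` realise every `2¹⁶ m`.
-/

open Matrix

theorem Matrix.det_fromBlocks_circulant {n R : Type*} [Fintype n] [DecidableEq n] [CommRing R]
    (A B : Matrix n n R) : (fromBlocks A B B A).det = (A + B).det * (A - B).det := by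
  have h : fromBlocks 1 0 1 1 * fromBlocks A B B A * fromBlocks 1 0 (-1) 1 =
      fromBlocks (A - B) B 0 (A + B) := by
    simp only [fromBlocks_multiply, Matrix.one_mul, Matrix.zero_mul, Matrix.mul_one,
      Matrix.mul_zero, Matrix.mul_neg, add_zero, zero_add]
    congr 1 <;> abel
  simpa [det_fromBlocks_zero₁₂, det_fromBlocks_zero₂₁, mul_comm] using congrArg det h

section GroupDet

variable {G R : Type*} [Group G] [Fintype G] [DecidableEq G] [CommRing R]

theorem map_groupDet {S : Type*} [CommRing S] (f : R →+* S) (a : G → R) :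
    f (groupDet a) = groupDet (f ∘ a) := by
  rw [groupDet, groupDet, RingHom.map_det]
  rfl

theorem groupDet_modEq {n : ℕ} {a b : G → ℤ} (h : ∀ g, a g ≡ b g [ZMOD n]) :
    groupDet a ≡ groupDet b [ZMOD n] := by
  have hab : Int.castRingHom (ZMod n) ∘ a = Int.castRingHom (ZMod n) ∘ b :=
    funext fun g => (ZMod.intCast_eq_intCast_iff _ _ n).mpr (h g)
  rw [← ZMod.intCast_eq_intCast_iff, ← eq_intCast (Int.castRingHom _), map_groupDet, hab,
    ← map_groupDet, eq_intCast]

/-- `ht` says that `t` is a transversal of `⟨z⟩` in `G`. -/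
theorem groupDet_eq_det_add_mul_det_sub {T : Type*} [Fintype T] [DecidableEq T] (a : G → R)
    {z : G} (hz : z ∈ Subgroup.center G) (hz2 : z * z = 1) {t : T → G}
    (ht : Function.Bijective (Sum.elim t fun i => t i * z)) :
    groupDet a = (of fun i j => a (t i * (t j)⁻¹) + a (t i * (t j)⁻¹ * z)).det *
      (of fun i j => a (t i * (t j)⁻¹) - a (t i * (t j)⁻¹ * z)).det := by
  let A : Matrix T T R := of fun i j => a (t i * (t j)⁻¹)
  let B : Matrix T T R := of fun i j => a (t i * (t j)⁻¹ * z)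
  have hzinv : z⁻¹ = z := inv_eq_of_mul_eq_one_right hz2
  have hcomm : ∀ g, z * g = g * z := fun g => (Subgroup.mem_center_iff.mp hz g).symm
  have h₁₂ : ∀ x y : G, x * (y * z)⁻¹ = x * y⁻¹ * z := fun x y => by
    rw [_root_.mul_inv_rev, hzinv, hcomm, mul_assoc]
  have h₂₁ : ∀ x y : G, x * z * y⁻¹ = x * y⁻¹ * z := fun x y => by
    rw [mul_assoc, hcomm, ← mul_assoc]
  have hzz : ∀ x : G, x * z * z = x := fun x => by rw [mul_assoc, hz2, mul_one]
  have hblocks : (of fun g h : G => a (g * h⁻¹)).submatrix (Equiv.ofBijective _ ht)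
      (Equiv.ofBijective _ ht) = fromBlocks A B B A := by
    ext (i | i) (j | j) <;>
      simp only [Equiv.coe_ofBijective, submatrix_apply, Sum.elim_inl, Sum.elim_inr, of_apply,
        fromBlocks_apply₁₁, fromBlocks_apply₁₂, fromBlocks_apply₂₁, fromBlocks_apply₂₂, A, B, h₁₂,
        h₂₁, hzz]
  rw [groupDet, ← det_submatrix_equiv_self (Equiv.ofBijective _ ht), hblocks,
    det_fromBlocks_circulant]
  rfl

end GroupDet

section ZModTwoProd

variable {H : Type*} [Group H] [Fintype H] [DecidableEq H]

theorem groupDet_multiplicative_zmod_two_prod {R : Type*} [CommRing R]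
    (a : Multiplicative (ZMod 2) × H → R) :
    groupDet a = groupDet (fun h => a (1, h) + a (.ofAdd 1, h)) *
      groupDet (fun h => a (1, h) - a (.ofAdd 1, h)) := by
  have hz : ((.ofAdd 1, 1) : Multiplicative (ZMod 2) × H) ∈ Subgroup.center _ :=
    Subgroup.mem_center_iff.mpr fun g => Prod.ext (mul_comm _ _) (by simp)
  have hz2 : ((.ofAdd 1, 1) : Multiplicative (ZMod 2) × H) * (.ofAdd 1, 1) = 1 :=
    Prod.ext (show Multiplicative.ofAdd (1 : ZMod 2) * .ofAdd 1 = 1 by decide) (mul_one 1)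
  have ht : Function.Bijective (Sum.elim (fun h : H => ((1 : Multiplicative (ZMod 2)), h))
      fun h => (1, h) * (.ofAdd 1, 1)) := by
    refine ⟨?_, ?_⟩
    · rintro (i | i) (j | j) h <;>
        simp_all [Prod.ext_iff, eq_comm (a := (1 : Multiplicative (ZMod 2)))]
    · rintro ⟨ε, h⟩
      obtain rfl | rfl : ε = 1 ∨ ε = .ofAdd 1 := by revert ε; decide
      exacts [⟨.inl h, rfl⟩, ⟨.inr h, by simp⟩]
  rw [groupDet_eq_det_add_mul_det_sub a hz hz2 ht]
  simp [groupDet]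

theorem mem_detSet_multiplicative_zmod_two_prod_iff {N : ℤ} :
    N ∈ detSet (Multiplicative (ZMod 2) × H) ↔
      ∃ b c : H → ℤ, (∀ g, b g ≡ c g [ZMOD 2]) ∧ groupDet b * groupDet c = N := by
  constructor
  · rintro ⟨a, rfl⟩
    exact ⟨_, _, fun g => Int.modEq_iff_dvd.mpr ⟨-a (.ofAdd 1, g), by ring⟩,
      (groupDet_multiplicative_zmod_two_prod a).symm⟩
  · rintro ⟨b, c, hbc, rfl⟩
    choose k hk using fun g => (hbc g).dvd
    refine ⟨fun x => if x.1 = 1 then b x.2 + k x.2 else -k x.2, ?_⟩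
    rw [groupDet_multiplicative_zmod_two_prod]
    congr 2 <;> funext g <;>
      simp only [↓reduceIte, ofAdd_eq_one, one_ne_zero, add_neg_cancel_right, sub_neg_eq_add]
    linarith [hk g]

end ZModTwoProd

theorem det_kleinFour_circulant {R : Type*} [CommRing R] (u v U V : R) :
    !![u, v, U, V; v, u, V, U; U, V, u, v; V, U, v, u].det =
      (u + v + U + V) * (u + v - U - V) * (u - v + U - V) * (u - v - U + V) := by
  simp [det_succ_row_zero, Fin.sum_univ_succ, Fin.succAbove, Fin.castSucc, Fin.castAdd,
    Fin.castLE]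
  ring

theorem det_kleinFour_twisted {R : Type*} [CommRing R] (p q P Q : R) :
    !![p, -q, P, Q; q, p, -Q, P; P, -Q, p, q; Q, P, -q, p].det =
      (p ^ 2 + q ^ 2 - P ^ 2 - Q ^ 2) ^ 2 := by
  simp [det_succ_row_zero, Fin.sum_univ_succ, Fin.succAbove, Fin.castSucc, Fin.castAdd,
    Fin.castLE]
  ring

/-- The group determinant of `D₈` in the coordinates `u = b r⁰ + b r²`, `p = b r⁰ - b r²`,
`v, q` (from `r¹, r³`), `U, P` (from `s r⁰, s r²`) and `V, Q` (from `s r¹, s r³`). -/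
def dihedralDet {R : Type*} [CommRing R] (u v U V p q P Q : R) : R :=
  (u + v + U + V) * (u + v - U - V) * (u - v + U - V) * (u - v - U + V) *
    (p ^ 2 + q ^ 2 - P ^ 2 - Q ^ 2) ^ 2

open DihedralGroup in
theorem groupDet_dihedralGroup_four {R : Type*} [CommRing R] (b : DihedralGroup 4 → R) :
    groupDet b = dihedralDet (b (r 0) + b (r 2)) (b (r 1) + b (r 3)) (b (sr 0) + b (sr 2))
      (b (sr 1) + b (sr 3)) (b (r 0) - b (r 2)) (b (r 1) - b (r 3)) (b (sr 0) - b (sr 2))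
      (b (sr 1) - b (sr 3)) := by
  let t : Fin 4 → DihedralGroup 4 := ![r 0, r 1, sr 0, sr 1]
  have hz : r 2 ∈ Subgroup.center (DihedralGroup 4) := by
    rw [Subgroup.mem_center_iff]
    decide
  have ht : Function.Bijective (Sum.elim t fun i => t i * r 2) := by decide
  rw [groupDet_eq_det_add_mul_det_sub b hz (by decide) ht, dihedralDet,
    ← det_kleinFour_circulant, ← det_kleinFour_twisted]
  congr 2 <;> ext i j <;> fin_cases i <;> fin_cases j <;>
    simp [t, show (-1 : ZMod 4) = 3 from rfl, show (3 + 2 : ZMod 4) = 1 from rfl,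
      show (1 + 2 : ZMod 4) = 3 from rfl] <;>
    abel

theorem Int.four_dvd_sq_sub_sq_of_even_sub {a b : ℤ} (h : Even (a - b)) :
    4 ∣ a ^ 2 - b ^ 2 := by
  obtain ⟨c, hc⟩ := h
  exact ⟨c * (b + c), by linear_combination (a + b + 2 * c) * hc⟩

theorem Int.four_dvd_mul_of_even_add {a b : ℤ} (hab : Even (a + b)) (h : Even (a * b)) :
    4 ∣ a * b := by
  have ⟨ha, hb⟩ : Even a ∧ Even b := by
    rcases Int.even_mul.mp h with h' | h' <;> simp_all [Int.even_add]
  exact mul_dvd_mul ha.two_dvd hb.two_dvd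

theorem Int.all_odd_or_four_dvd_mul_of_even_add {a b c d : ℤ} (h : Even (a + b + c + d)) :
    (Odd a ∧ Odd b ∧ Odd c ∧ Odd d) ∨ 4 ∣ a * b * c * d := by
  rcases Int.even_or_odd (a * b) with hab | hab <;>
    rcases Int.even_or_odd (c * d) with hcd | hcd
  · right
    simpa [mul_assoc] using mul_dvd_mul hab.two_dvd hcd.two_dvd
  · obtain ⟨hc, hd⟩ := Int.odd_mul.mp hcd
    have hab' : Even (a + b) := by simpa using h.sub (hc.add_odd hd)
    exact .inr (((four_dvd_mul_of_even_add hab' hab).mul_right c).mul_right d)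
  · obtain ⟨ha, hb⟩ := Int.odd_mul.mp hab
    have hcd' : Even (c + d) := by simpa [add_assoc] using h.sub (ha.add_odd hb)
    right
    rw [mul_assoc]
    exact (four_dvd_mul_of_even_add hcd' hcd).mul_left (a * b)
  · exact .inl ⟨(Int.odd_mul.mp hab).1, (Int.odd_mul.mp hab).2, (Int.odd_mul.mp hcd).1,
      (Int.odd_mul.mp hcd).2⟩

section DihedralDet

variable {u v U V p q P Q : ℤ}

theorem even_dihedralDet_iff (hp : Even (u - p)) (hq : Even (v - q)) (hP : Even (U - P))
    (hQ : Even (V - Q)) : Even (dihedralDet u v U V p q P Q) ↔ Even (u + v + U + V) := by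
  simp only [Int.even_sub] at hp hq hP hQ
  simp [dihedralDet, Int.even_mul, Int.even_add, Int.even_sub, Int.even_pow, hp, hq, hP, hQ]

theorem two_pow_eight_dvd_dihedralDet (hp : Even (u - p)) (hq : Even (v - q))
    (hP : Even (U - P)) (hQ : Even (V - Q)) (hσ : Even (u + v + U + V)) :
    2 ^ 8 ∣ dihedralDet u v U V p q P Q := by
  obtain ⟨k, hk⟩ := hσ
  have hF : dihedralDet u v U V p q P Q = 2 ^ 4 * (k * (k - U - V) * (k - v - V) * (k - v - U)) *
      (p ^ 2 + q ^ 2 - P ^ 2 - Q ^ 2) ^ 2 := by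
    rw [dihedralDet, show u = k + k - v - U - V by omega]
    ring
  rw [hF]
  rcases Int.all_odd_or_four_dvd_mul_of_even_add (a := k) (b := k - U - V) (c := k - v - V)
    (d := k - v - U) ⟨2 * k - v - U - V, by ring⟩ with ⟨h₁, h₂, h₃, h₄⟩ | ⟨x, hx⟩
  · have hpP : Even (p - P) := by
      rw [show p - P = k + (k - v - V) - 2 * U - (u - p) + (U - P) by omega]
      exact (((h₁.add_odd h₃).sub (even_two_mul U)).sub hp).add hP
    have hqQ : Even (q - Q) := by
      rw [show q - Q = k - U - V - (k - v - U) - (v - q) + (V - Q) by omega]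
      exact ((h₂.sub_odd h₄).sub hq).add hQ
    obtain ⟨e, he⟩ : 4 ∣ p ^ 2 + q ^ 2 - P ^ 2 - Q ^ 2 := by
      rw [show p ^ 2 + q ^ 2 - P ^ 2 - Q ^ 2 = p ^ 2 - P ^ 2 + (q ^ 2 - Q ^ 2) by ring]
      exact dvd_add (Int.four_dvd_sq_sub_sq_of_even_sub hpP)
        (Int.four_dvd_sq_sub_sq_of_even_sub hqQ)
    rw [he]
    exact ⟨k * (k - U - V) * (k - v - V) * (k - v - U) * e ^ 2, by ring⟩
  · obtain ⟨e, he⟩ : Even (p ^ 2 + q ^ 2 - P ^ 2 - Q ^ 2) := by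
      have hσ : Even (u + v + U + V) := ⟨k, hk⟩
      simp only [Int.even_sub, Int.even_add, Int.even_pow] at hp hq hP hQ hσ ⊢
      simpa [← hp, ← hq, ← hP, ← hQ] using hσ
    rw [hx, he]
    exact ⟨x * e ^ 2, by ring⟩

end DihedralDet

open DihedralGroup in
theorem two_pow_eight_dvd_groupDet_dihedralGroup_four {b : DihedralGroup 4 → ℤ}
    (h : Even (groupDet b)) : 2 ^ 8 ∣ groupDet b := by
  have hp : Even (b (r 0) + b (r 2) - (b (r 0) - b (r 2))) := ⟨b (r 2), by ring⟩
  have hq : Even (b (r 1) + b (r 3) - (b (r 1) - b (r 3))) := ⟨b (r 3), by ring⟩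
  have hP : Even (b (sr 0) + b (sr 2) - (b (sr 0) - b (sr 2))) := ⟨b (sr 2), by ring⟩
  have hQ : Even (b (sr 1) + b (sr 3) - (b (sr 1) - b (sr 3))) := ⟨b (sr 3), by ring⟩
  rw [groupDet_dihedralGroup_four] at h ⊢
  exact two_pow_eight_dvd_dihedralDet hp hq hP hQ ((even_dihedralDet_iff hp hq hP hQ).mp h)

open DihedralGroup in
theorem exists_groupDet_mul_groupDet_eq_two_pow_sixteen_mul (m : ℤ) :
    ∃ b c : DihedralGroup 4 → ℤ,
      (∀ g, b g ≡ c g [ZMOD 2]) ∧ groupDet b * groupDet c = 2 ^ 16 * m := by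
  rcases Int.even_or_odd' m with ⟨w, rfl | rfl⟩
  -- `D(b) = -2⁹ w` and `D(c) = -2⁸`
  · refine ⟨fun | r i => ![1 - 2 * w, -2 * w, 1, 0] i | sr i => ![-1 - 2 * w, -2 * w, 0, -1] i,
      fun | r i => ![-1, -2, -1, 0] i | sr i => ![-1, 0, 0, 1] i, ?_, ?_⟩
    · rintro (i | i) <;> fin_cases i <;> simp [Int.ModEq]
    · simp only [groupDet_dihedralGroup_four, dihedralDet, Matrix.cons_val]
      ring
  -- `D(b) = 2⁸ (2w + 1)` and `D(c) = 2⁸`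
  · refine ⟨fun | r i => ![2 + 2 * w, 1 + 2 * w, 1, 0] i | sr i => ![2 * w, 1 + 2 * w, 0, -1] i,
      fun | r i => ![-2, -1, -1, 0] i | sr i => ![0, -1, 0, 1] i, ?_, ?_⟩
    · rintro (i | i) <;> fin_cases i <;> simp [Int.ModEq]
    · simp only [groupDet_dihedralGroup_four, dihedralDet, Matrix.cons_val]
      ring

theorem even_detSet_Z2_D8 :
    {N : ℤ | Even N ∧ N ∈ detSet (Multiplicative (ZMod 2) × DihedralGroup 4)} =
      {N : ℤ | ∃ m : ℤ, N = 2 ^ 16 * m} := by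
  ext N
  simp only [Set.mem_ofPred_eq, mem_detSet_multiplicative_zmod_two_prod_iff]
  constructor
  · rintro ⟨hN, b, c, hbc, rfl⟩
    have hsame : Even (groupDet b) ↔ Even (groupDet c) :=
      (Int.even_sub.mp (even_iff_two_dvd.mpr (groupDet_modEq hbc).dvd)).symm
    have hb : Even (groupDet b) := (Int.even_mul.mp hN).elim id hsame.mpr
    obtain ⟨x, hx⟩ := two_pow_eight_dvd_groupDet_dihedralGroup_four hb
    obtain ⟨y, hy⟩ := two_pow_eight_dvd_groupDet_dihedralGroup_four (hsame.mp hb)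
    exact ⟨x * y, by rw [hx, hy]; ring⟩
  · rintro ⟨m, rfl⟩
    exact ⟨⟨2 ^ 15 * m, by ring⟩, exists_groupDet_mul_groupDet_eq_two_pow_sixteen_mul m⟩
end

section
/- Let N be an odd integer. Then N can be written as N = m(m + 16k) for some odd integer m and some integer k if and only if either N ≡ 1 (mod 16), or N ≡ 9 (mod 16) and N has a prime factor p with p mod 16 ∈ {3, 5, 11, 13} (i.e. p ≡ ±3 or ±5 mod 16). -/
lemma aux_nat (n : ℕ) (hn : n % 8 = 3 ∨ n % 8 = 5) :
    ∃ p : ℕ, p.Prime ∧ p ∣ n ∧ (p % 8 = 3 ∨ p % 8 = 5) := by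
  induction n using Nat.strong_induction_on with
  | _ n ih =>
    have hn1 : n ≠ 1 := by omega
    have hq : n.minFac.Prime := Nat.minFac_prime hn1
    by_cases h : n.minFac % 8 = 3 ∨ n.minFac % 8 = 5
    · exact ⟨n.minFac, hq, Nat.minFac_dvd n, h⟩
    · obtain ⟨m, hm⟩ := Nat.minFac_dvd n
      have h2 : ¬ (2 ∣ n) := by omega
      have hq2 : n.minFac % 2 = 1 := by
        rcases hq.eq_two_or_odd with h' | h'
        · exact absurd (h' ▸ Nat.minFac_dvd n) h2
        · exact h'
      have hq8 : n.minFac % 8 = 1 ∨ n.minFac % 8 = 7 := by omega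
      have hm0 : m ≠ 0 := by rintro rfl; simp at hm; omega
      have hmlt : m < n := by
        nlinarith [hm, hq.two_le, Nat.one_le_iff_ne_zero.mpr hm0]
      have key : (n.minFac * m) % 8 = n.minFac % 8 * (m % 8) % 8 :=
        Nat.mul_mod _ _ _
      rw [← hm] at key
      have hm8 : m % 8 = 3 ∨ m % 8 = 5 := by
        rcases hq8 with h' | h' <;> rw [h'] at key <;> omega
      obtain ⟨p, pp, pd, pm⟩ := ih m hmlt hm8
      exact ⟨p, pp, pd.trans ⟨n.minFac, hm.trans (mul_comm _ _)⟩, pm⟩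

theorem odd_form_iff (N : ℤ) (hN : Odd N) :
    (∃ m k : ℤ, Odd m ∧ N = m * (m + 16 * k)) ↔
      (N % 16 = 1 ∨
        (N % 16 = 9 ∧ ∃ p : ℕ, p.Prime ∧ (p : ℤ) ∣ N ∧
          (p % 16 = 3 ∨ p % 16 = 5 ∨ p % 16 = 11 ∨ p % 16 = 13))) := by
  constructor
  · rintro ⟨m, k, hm, hNe⟩
    have hm2 : m % 2 = 1 := Int.odd_iff.mp hm
    have hNmm : N = m * m + 16 * (m * k) := by rw [hNe]; ring
    have hsq : (m * m) % 16 = m % 16 * (m % 16) % 16 := Int.mul_emod m m 16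
    have hNsq : N % 16 = m % 16 * (m % 16) % 16 := by omega
    by_cases hc : m % 8 = 3 ∨ m % 8 = 5
    · right
      have h4 : m % 16 = 3 ∨ m % 16 = 5 ∨ m % 16 = 11 ∨ m % 16 = 13 := by
        omega
      have hN9 : N % 16 = 9 := by
        rcases h4 with h | h | h | h <;> rw [h] at hNsq <;> omega
      refine ⟨hN9, ?_⟩
      have hm8 : m.natAbs % 8 = 3 ∨ m.natAbs % 8 = 5 := by omega
      obtain ⟨p, pp, pd, pm⟩ := aux_nat m.natAbs hm8
      have hpm : (p : ℤ) ∣ m :=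
        dvd_trans (Int.natCast_dvd_natCast.mpr pd) (Int.natAbs_dvd.mpr (dvd_refl m))
      exact ⟨p, pp, hpm.trans ⟨m + 16 * k, hNe⟩, by omega⟩
    · left
      have h4 : m % 16 = 1 ∨ m % 16 = 7 ∨ m % 16 = 9 ∨ m % 16 = 15 := by
        omega
      rcases h4 with h | h | h | h <;> rw [h] at hNsq <;> omega
  · rintro (h1 | ⟨h9, p, pp, hpd, hp16⟩)
    · obtain ⟨k, hk⟩ : (16 : ℤ) ∣ (N - 1) := by omega
      exact ⟨1, k, odd_one, by linear_combination hk⟩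
    · obtain ⟨b, hb⟩ := hpd
      have hpc : (p : ℤ) % 16 = 3 ∨ (p : ℤ) % 16 = 5 ∨ (p : ℤ) % 16 = 11 ∨
          (p : ℤ) % 16 = 13 := by omega
      have key : N % 16 = (p : ℤ) % 16 * (b % 16) % 16 := by
        rw [hb]; exact Int.mul_emod _ _ _
      have hbp : b % 16 = (p : ℤ) % 16 := by
        rcases hpc with h | h | h | h <;> rw [h] at key ⊢ <;> omega
      obtain ⟨k, hk⟩ : ∃ k : ℤ, b = (p : ℤ) + 16 * k := ⟨(b - p) / 16, by omega⟩
      refine ⟨(p : ℤ), k, Int.odd_iff.mpr (by omega), ?_⟩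
      rw [hb, hk]
end

section
/- Let n ≥ 1 and let G = (ZMod 2)^n be the elementary abelian 2-group of order 2^n. The set of odd integers that are integer group determinants of G is exactly the set of integers congruent to 1 modulo 2^n. -/
/-!
Split `Fin (n + 1) → C₂` as `C₂ × H`. The group matrix of `d` is then the block matrix
`[[B, C], [C, B]]` of the group matrices of `b = d (1, ·)` and `c = d (τ, ·)`, so
`D(d) = D(b + c) D(b - c) = D(b ⋆ b - c ⋆ c)`, where `⋆` is convolution, which is commutative on the
abelian group `H`. If `d ≡ 0 mod 2 ^ k` off the identity, then `f = b ⋆ b - c ⋆ c` is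
`≡ 0 mod 2 ^ (k + 1)` off the identity, because at `g ≠ 1` the terms of a convolution square
pair up under the fixed-point-free involution `t ↦ g t⁻¹`; also `f 1 ≡ d 1 ^ 2 mod 2 ^ (2 k)`.
Iterating from `k = 1` gives `D(d) ≡ d(1) ^ (2 ^ n) mod 2 ^ (n + k)`. A first step from `k = 0`
brings an arbitrary `a` into this form, so an odd `D(a)` is `≡ f(1) ^ (2 ^ (n - 1)) ≡ 1 mod 2 ^ n`.
Conversely, `1 + 2 ^ n t` is the determinant of `δ₁ + t` (with `δ₁` the indicator of the identity),
a rank-one perturbation of the identity matrix.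
-/

open Matrix

theorem Matrix.det_fromBlocks_self_self {m R : Type*} [Fintype m] [DecidableEq m] [CommRing R]
    (B C : Matrix m m R) : (fromBlocks B C C B).det = (B + C).det * (B - C).det := by
  have h : fromBlocks 1 1 0 1 * fromBlocks B C C B * fromBlocks 1 (-1) 0 1 =
      fromBlocks (B + C) 0 C (B - C) := by
    simp only [fromBlocks_multiply, one_mul, zero_mul, zero_add, mul_one, mul_zero, add_zero,
      mul_neg, neg_add_rev, fromBlocks_inj, true_and]
    constructor <;> abel
  have := congrArg det h
  rw [det_mul, det_mul, det_fromBlocks_zero₂₁, det_fromBlocks_zero₂₁, det_fromBlocks_zero₁₂]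
    at this
  simpa using this

theorem two_mul_dvd_sum_of_involution {α R : Type*} [Fintype α] [CommRing R] (σ : α → α)
    (hσ : ∀ a, σ (σ a) = a) (hfree : ∀ a, σ a ≠ a) {q : α → R} (hq : ∀ a, q (σ a) = q a)
    {m : R} (hdvd : ∀ a, m ∣ q a) : 2 * m ∣ ∑ a, q a := by
  rw [← Ideal.Quotient.eq_zero_iff_dvd, map_sum]
  refine Finset.sum_ninvolution σ (fun a => ?_) (fun a _ => hfree a)
    (fun a => Finset.mem_univ _) hσ
  rw [hq, ← map_add, ← two_mul, Ideal.Quotient.eq_zero_iff_dvd]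
  exact mul_dvd_mul_left 2 (hdvd a)

theorem two_pow_add_dvd_pow_two_pow_sub {R : Type*} [CommRing R] {x y : R} {s : ℕ} (hs : s ≠ 0)
    (h : 2 ^ s ∣ x - y) (n : ℕ) : 2 ^ (s + n) ∣ x ^ 2 ^ n - y ^ 2 ^ n := by
  induction n with
  | zero => simpa using h
  | succ n ih =>
    have h2 : (2 : R) ∣ x ^ 2 ^ n + y ^ 2 ^ n := by
      have : x ^ 2 ^ n + y ^ 2 ^ n = (x ^ 2 ^ n - y ^ 2 ^ n) + 2 * y ^ 2 ^ n := by ring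
      rw [this]
      exact dvd_add ((dvd_pow_self 2 (by omega)).trans ih) (dvd_mul_right 2 _)
    have : x ^ 2 ^ (n + 1) - y ^ 2 ^ (n + 1) =
        (x ^ 2 ^ n - y ^ 2 ^ n) * (x ^ 2 ^ n + y ^ 2 ^ n) := by
      ring
    rw [this, ← add_assoc, pow_succ]
    exact mul_dvd_mul ih h2

section Group

variable {G R : Type*} [Group G] [Fintype G]

def groupConv [NonUnitalNonAssocSemiring R] (u v : G → R) : G → R :=
  fun w => ∑ t, u (w * t⁻¹) * v t

variable [DecidableEq G] [CommRing R]

theorem groupDet_groupConv (u v : G → R) :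
    groupDet (groupConv u v) = groupDet u * groupDet v := by
  rw [groupDet, groupDet, groupDet, ← det_mul]
  congr 1
  ext x y
  simp only [mul_apply, of_apply, groupConv]
  exact Fintype.sum_equiv (Equiv.mulRight y) _ _ fun t => by simp [mul_assoc]

theorem groupDet_comp_mulEquiv {G' : Type*} [Group G'] [Fintype G'] [DecidableEq G']
    (e : G ≃* G') (a : G' → R) : groupDet (a ∘ e) = groupDet a := by
  rw [groupDet, groupDet, ← det_submatrix_equiv_self e.toEquiv]
  congr 1
  ext x y
  simp

theorem groupDet_indicator_one_add_const (s : R) :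
    groupDet (fun g : G => (if g = 1 then 1 else 0) + s) = 1 + Fintype.card G * s := by
  have h : (of fun g h : G => (if g * h⁻¹ = 1 then (1 : R) else 0) + s) =
      1 + replicateCol Unit (fun _ : G => s) * replicateRow Unit (fun _ : G => (1 : R)) := by
    ext g h
    simp [one_apply, mul_inv_eq_one, mul_apply]
  rw [groupDet, h, det_one_add_replicateCol_mul_replicateRow]
  simp [dotProduct, mul_comm]

theorem sq_dvd_groupConv_self_one_sub {u : G → R} {m : R} (hu : ∀ t ≠ 1, m ∣ u t) :
    m ^ 2 ∣ groupConv u u 1 - u 1 ^ 2 := by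
  rw [groupConv, ← Finset.add_sum_erase _ _ (Finset.mem_univ 1)]
  simp only [one_mul, inv_one, add_sub_cancel_left, sq]
  refine Finset.dvd_sum fun t ht => mul_dvd_mul (hu _ ?_) (hu _ ?_)
  · simpa using Finset.ne_of_mem_erase ht
  · exact Finset.ne_of_mem_erase ht

end Group

section CommGroup

variable {G R : Type*} [CommGroup G] [Fintype G]

theorem groupConv_comm [CommSemiring R] (u v : G → R) : groupConv u v = groupConv v u :=
  funext fun w => Fintype.sum_equiv (Equiv.divLeft w) _ _ fun t => by
    simp [div_eq_mul_inv, mul_comm]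

variable [CommRing R]

theorem groupConv_add_sub (b c : G → R) :
    groupConv (b + c) (b - c) = groupConv b b - groupConv c c := by
  funext w
  have hcomm := congrFun (groupConv_comm c b) w
  simp only [groupConv, Pi.add_apply, Pi.sub_apply, add_mul, mul_sub, Finset.sum_add_distrib,
    Finset.sum_sub_distrib] at hcomm ⊢
  linear_combination hcomm

theorem two_mul_dvd_groupConv_self {u : G → R} {m : R} {g : G} (hg : ∀ t, t * t ≠ g)
    (hdvd : ∀ t, m ∣ u (g * t⁻¹) * u t) : 2 * m ∣ groupConv u u g :=
  two_mul_dvd_sum_of_involution (fun t => g * t⁻¹) (fun t => by simp)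
    (fun t h => hg t (mul_inv_eq_iff_eq_mul.mp h).symm) (fun t => by simp [mul_comm]) hdvd

end CommGroup

local notation "C₂" => Multiplicative (ZMod 2)

local notation "τ" => Multiplicative.ofAdd (1 : ZMod 2)

def sumEquivProdC₂ (H : Type*) : H ⊕ H ≃ C₂ × H where
  toFun := Sum.elim (fun h => (1, h)) (fun h => (τ, h))
  invFun p := if p.1 = 1 then Sum.inl p.2 else Sum.inr p.2
  left_inv := by rintro (h | h) <;> simp [show τ ≠ 1 by decide]
  right_inv := by
    rintro ⟨k, h⟩
    obtain rfl | rfl : k = 1 ∨ k = τ := by revert k; decide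
    all_goals simp [show τ ≠ 1 by decide]

theorem groupDet_C₂_prod {H R : Type*} [Group H] [Fintype H] [DecidableEq H] [CommRing R]
    (a : C₂ × H → R) : groupDet a =
      groupDet (fun h => a (1, h) + a (τ, h)) * groupDet (fun h => a (1, h) - a (τ, h)) := by
  rw [groupDet, ← det_submatrix_equiv_self (sumEquivProdC₂ H)]
  have hblocks :
      (of fun g h : C₂ × H => a (g * h⁻¹)).submatrix (sumEquivProdC₂ H) (sumEquivProdC₂ H) =
        fromBlocks (of fun x y : H => a (1, x * y⁻¹)) (of fun x y : H => a (τ, x * y⁻¹))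
          (of fun x y : H => a (τ, x * y⁻¹)) (of fun x y : H => a (1, x * y⁻¹)) := by
    ext (x | x) (y | y) <;>
      simp [sumEquivProdC₂, show τ⁻¹ = τ by decide, show τ * τ = 1 by decide]
  rw [hblocks, det_fromBlocks_self_self]
  rfl

theorem exists_groupDet_eq_of_mulEquiv_C₂_prod {G H R : Type*} [Group G] [Fintype G]
    [DecidableEq G] [CommGroup H] [Fintype H] [DecidableEq H] [CommRing R]
    (hH : ∀ x : H, x * x = 1) (e : G ≃* C₂ × H) {m : R} {d : G → R} (hd : ∀ g ≠ 1, m ∣ d g) :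
    ∃ f : H → R, groupDet d = groupDet f ∧ (∀ h ≠ 1, 2 * m ∣ f h) ∧ m ^ 2 ∣ f 1 - d 1 ^ 2 := by
  set b : H → R := fun h => d (e.symm (1, h))
  set c : H → R := fun h => d (e.symm (τ, h))
  have hb : ∀ h ≠ 1, m ∣ b h := fun h hh => hd _ (by simp [Prod.ext_iff, hh])
  have hc : ∀ h, m ∣ c h := fun h => hd _ (by simp [Prod.ext_iff, show τ ≠ 1 by decide])
  refine ⟨groupConv b b - groupConv c c, ?_, fun h hh => ?_, ?_⟩
  · rw [← groupDet_comp_mulEquiv e.symm, groupDet_C₂_prod, ← groupDet_groupConv]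
    exact congrArg groupDet (groupConv_add_sub b c)
  · have hsq : ∀ t : H, t * t ≠ h := fun t => (hH t).trans_ne (Ne.symm hh)
    refine dvd_sub (two_mul_dvd_groupConv_self hsq fun t => ?_)
      (two_mul_dvd_groupConv_self hsq fun t => dvd_mul_of_dvd_right (hc t) _)
    by_cases ht : t = 1
    · exact dvd_mul_of_dvd_left (hb _ (by simpa [ht] using hh)) _
    · exact dvd_mul_of_dvd_right (hb t ht) _
  · have hb1 : b 1 = d 1 := by simp [b, ← Prod.one_eq_mk]
    have : (groupConv b b - groupConv c c) 1 - d 1 ^ 2 =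
        (groupConv b b 1 - b 1 ^ 2) - (groupConv c c 1 - c 1 ^ 2) - c 1 ^ 2 := by
      rw [Pi.sub_apply, hb1]; ring
    rw [this]
    exact dvd_sub (dvd_sub (sq_dvd_groupConv_self_one_sub hb)
      (sq_dvd_groupConv_self_one_sub fun t _ => hc t)) (pow_dvd_pow_of_dvd (hc 1) 2)

def piFinSuccMulEquiv (G : Type*) [Mul G] (n : ℕ) : (Fin (n + 1) → G) ≃* G × (Fin n → G) :=
  { (Fin.consEquiv fun _ => G).symm with map_mul' := fun _ _ => rfl }

theorem pi_C₂_mul_self {n : ℕ} (g : Fin n → C₂) : g * g = 1 :=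
  funext fun i => (by decide : ∀ x : C₂, x * x = 1) (g i)

theorem two_pow_add_dvd_groupDet_sub_pow (n : ℕ) {k : ℕ} (hk : k ≠ 0) {d : (Fin n → C₂) → ℤ}
    (hd : ∀ g ≠ 1, 2 ^ k ∣ d g) : 2 ^ (n + k) ∣ groupDet d - d 1 ^ 2 ^ n := by
  induction n generalizing k with
  | zero => simp [groupDet, det_unique]
  | succ n ih =>
    obtain ⟨f, hdf, hf, hf1⟩ :=
      exists_groupDet_eq_of_mulEquiv_C₂_prod pi_C₂_mul_self (piFinSuccMulEquiv C₂ n) hd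
    rw [← pow_succ'] at hf
    have hf_pow : 2 ^ (2 * k + n) ∣ f 1 ^ 2 ^ n - (d 1 ^ 2) ^ 2 ^ n :=
      two_pow_add_dvd_pow_two_pow_sub (by omega) (by rwa [← pow_mul, mul_comm] at hf1) n
    have : groupDet d - d 1 ^ 2 ^ (n + 1) =
        (groupDet f - f 1 ^ 2 ^ n) + (f 1 ^ 2 ^ n - (d 1 ^ 2) ^ 2 ^ n) := by
      rw [hdf, pow_succ, pow_mul]; ring
    rw [this]
    exact dvd_add ((pow_dvd_pow 2 (by omega)).trans (ih (by omega) hf))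
      ((pow_dvd_pow 2 (by omega)).trans hf_pow)

theorem odd_detSet_elementary_abelian_two (n : ℕ) (hn : 1 ≤ n) :
    {N : ℤ | Odd N ∧ N ∈ detSet (Fin n → Multiplicative (ZMod 2))} =
      {N : ℤ | N ≡ 1 [ZMOD (2 ^ n)]} := by
  obtain ⟨m, rfl⟩ : ∃ m, n = m + 1 := ⟨n - 1, by omega⟩
  ext N
  change Odd N ∧ N ∈ detSet _ ↔ N ≡ 1 [ZMOD 2 ^ (m + 1)]
  rw [Int.modEq_comm, Int.modEq_iff_dvd]
  constructor
  · rintro ⟨hodd, a, rfl⟩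
    obtain ⟨f, hdf, hf, -⟩ := exists_groupDet_eq_of_mulEquiv_C₂_prod pi_C₂_mul_self
      (piFinSuccMulEquiv C₂ m) (m := 1) (d := a) fun _ _ => one_dvd _
    have hdet : 2 ^ (m + 1) ∣ groupDet a - f 1 ^ 2 ^ m :=
      hdf ▸ two_pow_add_dvd_groupDet_sub_pow m one_ne_zero (by simpa using hf)
    have hf1 : Odd (f 1) := by
      have := hodd.sub_even (even_iff_two_dvd.mpr ((dvd_pow_self 2 (by omega)).trans hdet))
      rwa [sub_sub_cancel, Int.odd_pow' (by positivity)] at this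
    have hpow : 2 ^ (m + 1) ∣ f 1 ^ 2 ^ m - 1 := by
      have := two_pow_add_dvd_pow_two_pow_sub one_ne_zero
        (by simpa using (hf1.sub_odd odd_one).two_dvd) m
      rwa [one_pow, add_comm] at this
    simpa using dvd_add hdet hpow
  · rintro ⟨t, ht⟩
    refine ⟨⟨2 ^ m * t, by rw [← sub_add_cancel N 1, ht]; ring⟩,
      fun g => (if g = 1 then 1 else 0) + t, ?_⟩
    rw [groupDet_indicator_one_add_const, Fintype.card_fun, Fintype.card_multiplicative,
      ZMod.card, Fintype.card_fin]
    push_cast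
    linear_combination -ht
end

section
/- Let D_8 be the dihedral group of order 8 and let a, b : D_8 → ℤ. If the product D_{D_8}(a + b) · D_{D_8}(a − b) is odd, then D_{D_8}(a + b) ≡ D_{D_8}(a − b) (mod 16); consequently every odd integer group determinant of (ZMod 2) × D_8 is congruent to 1 or 9 modulo 16. -/
/-!
By Frobenius' factorisation, `D_{D_8}(u) = λ₁(u) λ₂(u) λ₃(u) λ₄(u) q(u)²`, where the `λᵢ(u)` are the
values of `u` under the four linear characters and `q(u)` is the determinant of `u` under the
two-dimensional representation. The `λᵢ` agree modulo 2 and every `λᵢ(a + b)` is odd, so one of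
`a`, `b` has all `λᵢ` even; as `D(b - a) = D(a - b)`, we may take it to be `b`. Expanding modulo 16,
`∏ λᵢ(a + b) - ∏ λᵢ(a - b) ≡ 2 ∏ λᵢ(a) · ∑ λᵢ(a) λᵢ(b)`, and by orthogonality the sum is four times
a pairing `c(a, b)` of `a` and `b` on `D_8 / ⟨r²⟩`; so the linear parts differ by `8 c(a, b)`.
Meanwhile `q(a + b) - q(a - b) = 4 B(a, b)` for the polar form `B` of `q`, so the squares differ
by `8 B(a, b)`. Since `c(a, b) ≡ B(a, b) (mod 2)`, the two errors cancel.

For the second claim, `D_{C₂ × G}(c) = D_G(a + b) D_G(a - b)` with `a`, `b` the restrictions of `c`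
to the two cosets of `G`; so an odd determinant of `C₂ × D_8` is `≡ x² (mod 16)` with `x` odd.
-/

open Matrix DihedralGroup

namespace Int

theorem prod_add_modEq_prod_sub {α₁ α₂ α₃ α₄ β₁ β₂ β₃ β₄ : ℤ}
    (hα₁ : Odd α₁) (hα₂ : Odd α₂) (hα₃ : Odd α₃) (hα₄ : Odd α₄)
    (hβ₁ : Even β₁) (hβ₂ : Even β₂) (hβ₃ : Even β₃) (hβ₄ : Even β₄) :
    (α₁ + β₁) * (α₂ + β₂) * (α₃ + β₃) * (α₄ + β₄) ≡
      (α₁ - β₁) * (α₂ - β₂) * (α₃ - β₃) * (α₄ - β₄) +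
        2 * (α₁ * α₂ * α₃ * α₄) * (α₁ * β₁ + α₂ * β₂ + α₃ * β₃ + α₄ * β₄) [ZMOD 16] := by
  obtain ⟨k₁, hk₁⟩ := eight_dvd_sq_sub_one_of_odd hα₁
  obtain ⟨k₂, hk₂⟩ := eight_dvd_sq_sub_one_of_odd hα₂
  obtain ⟨k₃, hk₃⟩ := eight_dvd_sq_sub_one_of_odd hα₃
  obtain ⟨k₄, hk₄⟩ := eight_dvd_sq_sub_one_of_odd hα₄
  obtain ⟨γ₁, rfl⟩ := hβ₁
  obtain ⟨γ₂, rfl⟩ := hβ₂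
  obtain ⟨γ₃, rfl⟩ := hβ₃
  obtain ⟨γ₄, rfl⟩ := hβ₄
  -- The terms linear in the `γᵢ` cancel because `αᵢ² ≡ 1 (mod 8)`; the cubic ones are `16 γγγα`.
  refine modEq_iff_dvd.mpr ⟨2 * (γ₁ * k₁ * α₂ * α₃ * α₄ + γ₂ * k₂ * α₁ * α₃ * α₄ +
      γ₃ * k₃ * α₁ * α₂ * α₄ + γ₄ * k₄ * α₁ * α₂ * α₃) -
      (γ₁ * γ₂ * γ₃ * α₄ + γ₁ * γ₂ * γ₄ * α₃ + γ₁ * γ₃ * γ₄ * α₂ + γ₂ * γ₃ * γ₄ * α₁), ?_⟩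
  linear_combination 4 * γ₁ * α₂ * α₃ * α₄ * hk₁ + 4 * γ₂ * α₁ * α₃ * α₄ * hk₂ +
    4 * γ₃ * α₁ * α₂ * α₄ * hk₃ + 4 * γ₄ * α₁ * α₂ * α₃ * hk₄

theorem add_four_mul_sq_modEq {m : ℤ} (hm : Odd m) (k : ℤ) :
    (m + 4 * k) ^ 2 ≡ m ^ 2 + 8 * k [ZMOD 16] := by
  obtain ⟨j, rfl⟩ := hm
  exact modEq_iff_dvd.mpr ⟨-(j * k + k ^ 2), by ring⟩

theorem mul_modEq_mul_of_modEq_add_eight_mul {x x' y y' s t : ℤ}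
    (hx : x ≡ x' + 8 * s [ZMOD 16]) (hy : y ≡ y' + 8 * t [ZMOD 16])
    (hx' : Odd x') (hy' : Odd y') (hst : Even (s + t)) : x * y ≡ x' * y' [ZMOD 16] := by
  obtain ⟨i, rfl⟩ := hx'
  obtain ⟨j, rfl⟩ := hy'
  obtain ⟨e, he⟩ := hst
  refine (hx.mul hy).trans (modEq_iff_dvd.mpr ⟨-(s * j + t * i + e + 4 * s * t), ?_⟩)
  linear_combination (-8) * he

end Int

section GroupDet

variable {R : Type*} [CommRing R]

theorem Matrix.det_fromBlocks_eq_det_add_mul_det_sub {m : Type*} [Fintype m] [DecidableEq m]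
    (P Q : Matrix m m R) : (fromBlocks P Q Q P).det = (P + Q).det * (P - Q).det := by
  have hfactor : fromBlocks P Q Q P =
      fromBlocks 1 (-1) 0 1 * fromBlocks (P + Q) 0 Q (P - Q) * fromBlocks 1 1 0 1 := by
    simp only [fromBlocks_multiply]
    congr 1 <;> simp only [Matrix.one_mul, Matrix.mul_one, Matrix.zero_mul, Matrix.mul_zero,
      Matrix.neg_mul, add_zero, zero_add] <;> abel
  rw [hfactor, det_mul, det_mul, det_fromBlocks_zero₂₁, det_fromBlocks_zero₂₁,
    det_fromBlocks_zero₁₂]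
  simp

theorem groupDet_neg {G : Type*} [Group G] [Fintype G] [DecidableEq G]
    (hG : Even (Fintype.card G)) (a : G → R) : groupDet (-a) = groupDet a := by
  have hneg : (of fun g h : G => (-a) (g * h⁻¹)) = -of fun g h : G => a (g * h⁻¹) := rfl
  rw [groupDet, groupDet, hneg, det_neg, hG.neg_one_pow, one_mul]

theorem groupDet_zmod_two_prod {G : Type*} [Group G] [Fintype G] [DecidableEq G]
    (c : Multiplicative (ZMod 2) × G → R) :
    groupDet c = groupDet ((fun g => c (1, g)) + fun g => c (.ofAdd 1, g)) *
      groupDet ((fun g => c (1, g)) - fun g => c (.ofAdd 1, g)) := by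
  set t : Multiplicative (ZMod 2) := .ofAdd 1
  have ht : t ≠ 1 := by decide
  have ht_inv : t⁻¹ = t := by decide
  have ht_mul : t * t = 1 := by decide
  have h_cases : ∀ z : Multiplicative (ZMod 2), z = 1 ∨ z = t := by decide
  let e : G ⊕ G ≃ Multiplicative (ZMod 2) × G :=
    { toFun := Sum.elim (fun g => (1, g)) (fun g => (t, g))
      invFun := fun p => if p.1 = 1 then .inl p.2 else .inr p.2
      left_inv := by rintro (g | g) <;> simp [ht]
      right_inv := by rintro ⟨z, g⟩; rcases h_cases z with rfl | rfl <;> simp [ht] }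
  have hblocks : (of fun p q : Multiplicative (ZMod 2) × G => c (p * q⁻¹)).submatrix e e =
      fromBlocks (of fun g h => c (1, g * h⁻¹)) (of fun g h => c (t, g * h⁻¹))
        (of fun g h => c (t, g * h⁻¹)) (of fun g h => c (1, g * h⁻¹)) := by
    ext (g | g) (h | h) <;> simp [e, ht_inv, ht_mul]
  rw [groupDet, ← det_submatrix_equiv_self e, hblocks, det_fromBlocks_eq_det_add_mul_det_sub]
  rfl

theorem groupDet_dihedralGroup (n : ℕ) [NeZero n] (u : DihedralGroup n → R) :
    groupDet u = (of fun i j : ZMod n => u (r (i - j)) + u (sr (-i - j))).det *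
      (of fun i j : ZMod n => u (r (i - j)) - u (sr (-i - j))).det := by
  -- Listing the reflections as `sr (-i)` makes the two diagonal blocks equal.
  let e : ZMod n ⊕ ZMod n ≃ DihedralGroup n :=
    { toFun := Sum.elim r (fun i => sr (-i))
      invFun := fun | r i => .inl i | sr i => .inr (-i)
      left_inv := by rintro (i | i) <;> simp
      right_inv := by rintro (i | i) <;> simp }
  have hblocks : (of fun g h : DihedralGroup n => u (g * h⁻¹)).submatrix e e =
      fromBlocks (of fun i j => u (r (i - j))) (of fun i j => u (sr (-i - j)))
        (of fun i j => u (sr (-i - j))) (of fun i j => u (r (i - j))) := by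
    ext (i | i) (j | j) <;> simp [e, sub_eq_add_neg, add_comm]
  rw [groupDet, ← det_submatrix_equiv_self e, hblocks, det_fromBlocks_eq_det_add_mul_det_sub]
  rfl

end GroupDet

namespace DihedralGroup

section CommRing

variable {R : Type*} [CommRing R]

/-- `∑ g, χ g * u g` for the linear character `χ` of `D_8` with `χ r = δ`, `χ s = ε`. -/
def linChar (δ ε : R) (u : DihedralGroup 4 → R) : R :=
  u (r 0) + δ * u (r 1) + u (r 2) + δ * u (r 3) +
    ε * (u (sr 0) + δ * u (sr 1) + u (sr 2) + δ * u (sr 3))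

def linCharProd (u : DihedralGroup 4 → R) : R :=
  linChar 1 1 u * linChar (-1) 1 u * linChar 1 (-1) u * linChar (-1) (-1) u

/-- The determinant of `∑ g, u g • ρ g` for the two-dimensional irreducible representation `ρ`. -/
def quadChar (u : DihedralGroup 4 → R) : R :=
  (u (r 0) - u (r 2)) ^ 2 + (u (r 1) - u (r 3)) ^ 2 -
    (u (sr 0) - u (sr 2)) ^ 2 - (u (sr 1) - u (sr 3)) ^ 2

def quadPolar (a b : DihedralGroup 4 → R) : R :=
  (a (r 0) - a (r 2)) * (b (r 0) - b (r 2)) + (a (r 1) - a (r 3)) * (b (r 1) - b (r 3)) -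
    (a (sr 0) - a (sr 2)) * (b (sr 0) - b (sr 2)) - (a (sr 1) - a (sr 3)) * (b (sr 1) - b (sr 3))

/-- The dot product of the push-forwards of `a` and `b` to `D_8 ⧸ ⟨r 2⟩`. -/
def cosetPairing (a b : DihedralGroup 4 → R) : R :=
  (a (r 0) + a (r 2)) * (b (r 0) + b (r 2)) + (a (r 1) + a (r 3)) * (b (r 1) + b (r 3)) +
    (a (sr 0) + a (sr 2)) * (b (sr 0) + b (sr 2)) + (a (sr 1) + a (sr 3)) * (b (sr 1) + b (sr 3))

theorem det_of_r_add_mul_sr (ε : R) (hε : ε = 1 ∨ ε = -1) (u : DihedralGroup 4 → R) :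
    (of fun i j : ZMod 4 => u (r (i - j)) + ε * u (sr (-i - j))).det =
      linChar 1 ε u * linChar (-1) ε u * quadChar u := by
  have hM : (of fun i j : ZMod 4 => u (r (i - j)) + ε * u (sr (-i - j))).submatrix
      (ZMod.finEquiv 4).toEquiv (ZMod.finEquiv 4).toEquiv =
      !![u (r 0) + ε * u (sr 0), u (r 3) + ε * u (sr 3),
          u (r 2) + ε * u (sr 2), u (r 1) + ε * u (sr 1);
        u (r 1) + ε * u (sr 3), u (r 0) + ε * u (sr 2),
          u (r 3) + ε * u (sr 1), u (r 2) + ε * u (sr 0);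
        u (r 2) + ε * u (sr 2), u (r 1) + ε * u (sr 1),
          u (r 0) + ε * u (sr 0), u (r 3) + ε * u (sr 3);
        u (r 3) + ε * u (sr 1), u (r 2) + ε * u (sr 0),
          u (r 1) + ε * u (sr 3), u (r 0) + ε * u (sr 2)] := by
    ext i j
    fin_cases i <;> fin_cases j <;> rfl
  rw [← det_submatrix_equiv_self (ZMod.finEquiv 4).toEquiv, hM, det_succ_row_zero]
  simp [Fin.sum_univ_succ, det_fin_three, Fin.succAbove, linChar, quadChar]
  rcases hε with rfl | rfl <;> ring

theorem groupDet_eq_linCharProd_mul_quadChar_sq (u : DihedralGroup 4 → R) :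
    groupDet u = linCharProd u * quadChar u ^ 2 := by
  have h_add := det_of_r_add_mul_sr 1 (.inl rfl) u
  have h_sub := det_of_r_add_mul_sr (-1) (.inr rfl) u
  simp only [one_mul, neg_one_mul, ← sub_eq_add_neg] at h_add h_sub
  rw [groupDet_dihedralGroup, h_add, h_sub, linCharProd]
  ring

theorem linChar_add (δ ε : R) (a b : DihedralGroup 4 → R) :
    linChar δ ε (a + b) = linChar δ ε a + linChar δ ε b := by
  simp only [linChar, Pi.add_apply]
  ring

theorem linChar_sub (δ ε : R) (a b : DihedralGroup 4 → R) :
    linChar δ ε (a - b) = linChar δ ε a - linChar δ ε b := by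
  simp only [linChar, Pi.sub_apply]
  ring

theorem quadChar_add (a b : DihedralGroup 4 → R) :
    quadChar (a + b) = quadChar (a - b) + 4 * quadPolar a b := by
  simp only [quadChar, quadPolar, Pi.add_apply, Pi.sub_apply]
  ring

theorem sum_linChar_mul_linChar (a b : DihedralGroup 4 → R) :
    linChar 1 1 a * linChar 1 1 b + linChar (-1) 1 a * linChar (-1) 1 b +
      linChar 1 (-1) a * linChar 1 (-1) b + linChar (-1) (-1) a * linChar (-1) (-1) b =
      4 * cosetPairing a b := by
  simp only [linChar, cosetPairing]
  ring

theorem even_cosetPairing_add_quadPolar (a b : DihedralGroup 4 → R) :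
    Even (cosetPairing a b + quadPolar a b) :=
  ⟨a (r 0) * b (r 0) + a (r 2) * b (r 2) + a (r 1) * b (r 1) + a (r 3) * b (r 3) +
    a (sr 0) * b (sr 2) + a (sr 2) * b (sr 0) + a (sr 1) * b (sr 3) + a (sr 3) * b (sr 1), by
    simp only [cosetPairing, quadPolar]; ring⟩

end CommRing

theorem even_linChar_of_even_linChar_one_one {δ ε : ℤ} (hδ : Odd δ) (hε : Odd ε)
    {u : DihedralGroup 4 → ℤ} (hu : Even (linChar 1 1 u)) : Even (linChar δ ε u) := by
  obtain ⟨d, rfl⟩ := hδ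
  obtain ⟨e, rfl⟩ := hε
  have hdiff : Even (linChar (2 * d + 1) (2 * e + 1) u - linChar 1 1 u) :=
    ⟨d * (u (r 1) + u (r 3)) + e * (u (sr 0) + u (sr 2)) +
      (2 * e * d + e + d) * (u (sr 1) + u (sr 3)), by simp only [linChar]; ring⟩
  simpa using hdiff.add hu

theorem linCharProd_add_modEq (a b : DihedralGroup 4 → ℤ) (hb : Even (linChar 1 1 b))
    (h : Odd (linCharProd (a + b))) :
    linCharProd (a + b) ≡ linCharProd (a - b) + 8 * cosetPairing a b [ZMOD 16] := by
  have hβ {δ ε : ℤ} (hδ : Odd δ) (hε : Odd ε) : Even (linChar δ ε b) :=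
    even_linChar_of_even_linChar_one_one hδ hε hb
  have hα {δ ε : ℤ} (hab : Odd (linChar δ ε (a + b))) (hδ : Odd δ) (hε : Odd ε) :
      Odd (linChar δ ε a) := by
    simpa [linChar_add] using hab.sub_even (hβ hδ hε)
  simp only [linCharProd, Int.odd_mul] at h
  obtain ⟨⟨⟨h₁, h₂⟩, h₃⟩, h₄⟩ := h
  have hα₁ := hα h₁ odd_one odd_one
  have hα₂ := hα h₂ odd_neg_one odd_one
  have hα₃ := hα h₃ odd_one odd_neg_one
  have hα₄ := hα h₄ odd_neg_one odd_neg_one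
  have hprod := Int.prod_add_modEq_prod_sub hα₁ hα₂ hα₃ hα₄ (hβ odd_one odd_one)
    (hβ odd_neg_one odd_one) (hβ odd_one odd_neg_one) (hβ odd_neg_one odd_neg_one)
  rw [sum_linChar_mul_linChar, ← linCharProd] at hprod
  obtain ⟨j, hj⟩ : Odd (linCharProd a) := ((hα₁.mul hα₂).mul hα₃).mul hα₄
  have hodd_mul : 2 * linCharProd a * (4 * cosetPairing a b) ≡ 8 * cosetPairing a b [ZMOD 16] :=
    Int.modEq_iff_dvd.mpr ⟨-(j * cosetPairing a b), by rw [hj]; ring⟩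
  simpa only [linCharProd, linChar_add, linChar_sub] using hprod.trans (hodd_mul.add_left _)

theorem groupDet_add_modEq_groupDet_sub_of_even (a b : DihedralGroup 4 → ℤ)
    (hb : Even (linChar 1 1 b)) (h : Odd (groupDet (a + b) * groupDet (a - b))) :
    groupDet (a + b) ≡ groupDet (a - b) [ZMOD 16] := by
  simp only [groupDet_eq_linCharProd_mul_quadChar_sq, Int.odd_mul, Int.odd_pow' two_ne_zero] at h ⊢
  obtain ⟨⟨hL_add, -⟩, hL_sub, hQ_sub⟩ := h
  have hQ : quadChar (a + b) ^ 2 ≡ quadChar (a - b) ^ 2 + 8 * quadPolar a b [ZMOD 16] := by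
    rw [quadChar_add]
    exact Int.add_four_mul_sq_modEq hQ_sub _
  exact Int.mul_modEq_mul_of_modEq_add_eight_mul (linCharProd_add_modEq a b hb hL_add) hQ
    hL_sub hQ_sub.pow (even_cosetPairing_add_quadPolar a b)

theorem groupDet_add_modEq_groupDet_sub (a b : DihedralGroup 4 → ℤ)
    (h : Odd (groupDet (a + b) * groupDet (a - b))) :
    groupDet (a + b) ≡ groupDet (a - b) [ZMOD 16] := by
  rcases Int.even_or_odd (linChar 1 1 b) with hb | hb
  · exact groupDet_add_modEq_groupDet_sub_of_even a b hb h
  have hba : groupDet (b - a) = groupDet (a - b) := by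
    rw [← neg_sub, groupDet_neg (card (n := 4) ▸ even_two_mul 4)]
  have ha : Even (linChar 1 1 a) := by
    have hab : Odd (linChar 1 1 (a + b)) := by
      simp only [Int.odd_mul, groupDet_eq_linCharProd_mul_quadChar_sq, linCharProd] at h
      exact h.1.1.1.1.1
    simpa [linChar_add] using hab.sub_odd hb
  rw [add_comm, ← hba] at h ⊢
  exact groupDet_add_modEq_groupDet_sub_of_even b a ha h

end DihedralGroup

theorem groupDet_D8_mod_sixteen (a b : DihedralGroup 4 → ℤ)
    (h : Odd (groupDet (a + b) * groupDet (a - b))) :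
    groupDet (a + b) ≡ groupDet (a - b) [ZMOD 16] ∧
      ∀ N : ℤ, Odd N → N ∈ detSet (Multiplicative (ZMod 2) × DihedralGroup 4) →
        N % 16 = 1 ∨ N % 16 = 9 := by
  refine ⟨groupDet_add_modEq_groupDet_sub a b h, ?_⟩
  rintro N hN ⟨c, rfl⟩
  rw [groupDet_zmod_two_prod] at hN ⊢
  set x := groupDet ((fun g => c (1, g)) + fun g => c (.ofAdd 1, g))
  have hxy : x * _ ≡ x * x [ZMOD 16] := ((groupDet_add_modEq_groupDet_sub _ _ hN).mul_left x).symm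
  obtain ⟨k, hk⟩ := Int.eight_dvd_sq_sub_one_of_odd (Int.odd_mul.1 hN).1
  rw [sq] at hk
  unfold Int.ModEq at hxy
  omega
end
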